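/- Assume (1−δ)·σₓ < √(2π)·σ² and 0 < η < 1. Let x₀* be the unique solution of Φ((θ̄₀(x̄) − μ_p(x̄))/σ_p) = η/(1+η) and x₁* the unique solution of Φ((θ̄₁(x̄) − μ_p(x̄))/σ_p) = η/(1+η), where θ̄₀(x̄) and θ̄₁(x̄) are the unique roots of θ − (1−δ)·Φ((x̄−θ)/σₓ) = 0 and θ − δ − (1−δ)·Φ((x̄−θ)/σₓ) = 0 respectively. Then x₀* < x₁*. -/

import Mathlib

open Real Filter Set MeasureTheory

/-- Standard normal probability density function. -/
noncomputable def stdPdf (t : ℝ) : ℝ := (Real.sqrt (2 * Real.pi))⁻¹ * Real.exp (-(t ^ 2) / 2)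

/-- Standard normal cumulative distribution function. -/
noncomputable def stdCdf (x : ℝ) : ℝ := ∫ t in Set.Iic x, stdPdf t

lemma stdPdf_pos (t : ℝ) : 0 < stdPdf t := by
  unfold stdPdf
  positivity

lemma stdPdf_le (t : ℝ) : stdPdf t ≤ (Real.sqrt (2 * Real.pi))⁻¹ := by
  unfold stdPdf
  have h1 : Real.exp (-(t ^ 2) / 2) ≤ 1 := by
    rw [Real.exp_le_one_iff]; nlinarith [sq_nonneg t]
  have h2 : (0:ℝ) ≤ (Real.sqrt (2 * Real.pi))⁻¹ := by positivity
  nlinarith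

lemma integrable_stdPdf : Integrable stdPdf := by
  have h := (integrable_exp_neg_mul_sq (by norm_num : (0:ℝ) < 1/2)).const_mul
    ((Real.sqrt (2 * Real.pi))⁻¹)
  have he : stdPdf = fun x => (Real.sqrt (2 * Real.pi))⁻¹ * Real.exp (-(1/2) * x ^ 2) := by
    funext t; unfold stdPdf; ring_nf
  rw [he]; exact h

lemma stdCdf_sub {a b : ℝ} (hab : a ≤ b) :
    stdCdf b - stdCdf a = ∫ t in a..b, stdPdf t := by
  unfold stdCdf
  exact intervalIntegral.integral_Iic_sub_Iic integrable_stdPdf.integrableOn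
    integrable_stdPdf.integrableOn

lemma stdCdf_strictMono : StrictMono stdCdf := by
  intro a b hab
  have h : 0 < ∫ t in a..b, stdPdf t :=
    intervalIntegral.intervalIntegral_pos_of_pos
      (integrable_stdPdf.intervalIntegrable) stdPdf_pos hab
  have := stdCdf_sub hab.le
  linarith

lemma stdCdf_mono : Monotone stdCdf := stdCdf_strictMono.monotone

lemma stdCdf_lipschitz {a b : ℝ} (hab : a ≤ b) :
    stdCdf b - stdCdf a ≤ (b - a) / Real.sqrt (2 * Real.pi) := by
  rw [stdCdf_sub hab, intervalIntegral.integral_of_le hab]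
  have h1 : ∫ t in Set.Ioc a b, stdPdf t ≤ ∫ _t in Set.Ioc a b, (Real.sqrt (2 * Real.pi))⁻¹ := by
    apply setIntegral_mono_on integrable_stdPdf.integrableOn
      (integrableOn_const measure_Ioc_lt_top.ne) measurableSet_Ioc
    intro t _; exact stdPdf_le t
  have h2 : ∫ _t in Set.Ioc a b, (Real.sqrt (2 * Real.pi))⁻¹ =
      (b - a) * (Real.sqrt (2 * Real.pi))⁻¹ := by
    rw [setIntegral_const, Real.volume_real_Ioc_of_le hab, smul_eq_mul]
  rw [div_eq_mul_inv]
  linarith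

/-- Slope bound for implicit threshold functions. -/
lemma slope_bound (δ σ σx : ℝ) (hδ1 : δ < 1) (hσ : 0 < σ) (hσx : 0 < σx)
    (hA : (1 - δ) * σx < Real.sqrt (2 * Real.pi) * σ ^ 2)
    (θ : ℝ → ℝ) (c : ℝ) (hθ : ∀ x, θ x = c + (1 - δ) * stdCdf ((x - θ x) / σx))
    {x y : ℝ} (hxy : x < y) :
    θ y - θ x < σ ^ 2 / (σ ^ 2 + σx ^ 2) * (y - x) := by
  have hπ : 0 < Real.sqrt (2 * Real.pi) := Real.sqrt_pos.2 (by positivity)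
  set z := Real.sqrt (2 * Real.pi)
  set a := θ y - θ x with ha
  set d := y - x with hd
  have hd0 : 0 < d := by simp [hd]; linarith
  have hδ : 0 < 1 - δ := by linarith
  have hS : 0 < σ ^ 2 + σx ^ 2 := by positivity
  have hr : 0 < σ ^ 2 / (σ ^ 2 + σx ^ 2) := by positivity
  rcases le_or_gt a 0 with h | h
  · nlinarith
  · -- a > 0 : Φ values differ, hence arguments ordered
    have heq : a = (1 - δ) * (stdCdf ((y - θ y) / σx) - stdCdf ((x - θ x) / σx)) := by
      have h1 := hθ x; have h2 := hθ y
      rw [ha]; linear_combination h2 - h1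
    have hcd : stdCdf ((x - θ x) / σx) < stdCdf ((y - θ y) / σx) := by nlinarith
    have harg : (x - θ x) / σx < (y - θ y) / σx := by
      by_contra hc
      exact absurd (stdCdf_mono (not_lt.1 hc)) (not_le.2 hcd)
    have harg' : x - θ x ≤ y - θ y := by
      have := (div_lt_div_iff_of_pos_right hσx).1 harg
      linarith
    have hda : a ≤ d := by rw [ha, hd]; linarith
    have hlip2 : stdCdf ((y - θ y) / σx) - stdCdf ((x - θ x) / σx) ≤
        ((y - θ y) / σx - (x - θ x) / σx) / z := stdCdf_lipschitz harg.le
    have hdiff : (y - θ y) / σx - (x - θ x) / σx = (d - a) / σx := by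
      rw [hd, ha]; field_simp; ring
    rw [hdiff] at hlip2
    have key : a ≤ (1 - δ) * ((d - a) / σx / z) := by
      calc a = (1 - δ) * (stdCdf ((y - θ y) / σx) - stdCdf ((x - θ x) / σx)) := heq
        _ ≤ (1 - δ) * ((d - a) / σx / z) := by
            apply mul_le_mul_of_nonneg_left hlip2 hδ.le
    -- a * z * σx ≤ (1-δ)(d-a)
    have key2 : a * (z * σx) ≤ (1 - δ) * (d - a) := by
      have hzx : 0 < z * σx := by positivity
      have : (1 - δ) * ((d - a) / σx / z) = (1 - δ) * (d - a) / (z * σx) := by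
        rw [div_div, mul_comm σx z]; ring
      rw [this] at key
      exact (le_div_iff₀ hzx).1 key
    -- conclude: a < σ²/(σ²+σx²) * d
    rw [div_mul_eq_mul_div, lt_div_iff₀ hS]
    -- a * (σ² + σx²) < σ² * d
    -- from key2: a*z*σx + (1-δ)a ≤ (1-δ)d, and (1-δ)σx < z σ² ⇒ (1-δ) < zσ²/σx
    -- multiply key2 by σx: a*z*σx² + (1-δ)σx a ≤ (1-δ)σx d < z σ² d
    nlinarith [mul_pos h hd0, sq_nonneg σx, mul_lt_mul_of_pos_right hA hd0,
      mul_le_mul_of_nonneg_right key2 hσx.le, mul_lt_mul_of_pos_left hA h]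

/-- The equilibrium switching threshold with a large sale exceeds the one without: x₀* < x₁*. -/
theorem stmt9 (δ σ σx μ η : ℝ) (hδ0 : 0 < δ) (hδ1 : δ < 1) (hσ : 0 < σ) (hσx : 0 < σx)
    (hη0 : 0 < η) (hη1 : η < 1)
    (hA : (1 - δ) * σx < Real.sqrt (2 * Real.pi) * σ ^ 2)
    (θ0 θ1 : ℝ → ℝ)
    (hroot0 : ∀ xbar : ℝ, θ0 xbar - (1 - δ) * stdCdf ((xbar - θ0 xbar) / σx) = 0)
    (hroot1 : ∀ xbar : ℝ, θ1 xbar - δ - (1 - δ) * stdCdf ((xbar - θ1 xbar) / σx) = 0)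
    (x0 x1 : ℝ)
    (hx0 : stdCdf ((θ0 x0 - (σ ^ 2 * x0 + σx ^ 2 * μ) / (σ ^ 2 + σx ^ 2)) /
        Real.sqrt (σ ^ 2 * σx ^ 2 / (σ ^ 2 + σx ^ 2))) = η / (1 + η))
    (hx1 : stdCdf ((θ1 x1 - (σ ^ 2 * x1 + σx ^ 2 * μ) / (σ ^ 2 + σx ^ 2)) /
        Real.sqrt (σ ^ 2 * σx ^ 2 / (σ ^ 2 + σx ^ 2))) = η / (1 + η)) :
    x0 < x1 := by
  have hδ : 0 < 1 - δ := by linarith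
  have hS : 0 < σ ^ 2 + σx ^ 2 := by positivity
  set S := σ ^ 2 + σx ^ 2 with hSdef
  set σp := Real.sqrt (σ ^ 2 * σx ^ 2 / S) with hσp
  have hσp0 : 0 < σp := Real.sqrt_pos.2 (by positivity)
  -- equal arguments from injectivity
  have hinj := stdCdf_strictMono.injective (hx0.trans hx1.symm)
  have heq : θ0 x0 - (σ ^ 2 * x0 + σx ^ 2 * μ) / S = θ1 x1 - (σ ^ 2 * x1 + σx ^ 2 * μ) / S := by
    have h2 := congrArg (· * σp) hinj
    simpa [div_mul_cancel₀, hσp0.ne'] using h2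
  -- θ1 x > θ0 x
  have hθlt : ∀ x, θ0 x < θ1 x := by
    intro x
    by_contra hc
    push_neg at hc
    have hmono : stdCdf ((x - θ0 x) / σx) ≤ stdCdf ((x - θ1 x) / σx) :=
      stdCdf_mono (by gcongr)
    have h0 := hroot0 x; have h1 := hroot1 x
    nlinarith
  have hθ0' : ∀ x, θ0 x = 0 + (1 - δ) * stdCdf ((x - θ0 x) / σx) := by
    intro x; have := hroot0 x; linarith
  have hθ1' : ∀ x, θ1 x = δ + (1 - δ) * stdCdf ((x - θ1 x) / σx) := by
    intro x; have := hroot1 x; linarith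
  by_contra hc
  push_neg at hc  -- x1 ≤ x0
  rcases eq_or_lt_of_le hc with hE | hlt
  · -- x1 = x0
    have := hθlt x0
    rw [hE] at heq
    nlinarith
  · have hslope := slope_bound δ σ σx hδ1 hσ hσx hA θ1 δ hθ1' hlt
    have hlt0 : θ0 x0 < θ1 x0 := hθlt x0
    have hmu : (σ ^ 2 * x0 + σx ^ 2 * μ) / S - (σ ^ 2 * x1 + σx ^ 2 * μ) / S
        = σ ^ 2 / S * (x0 - x1) := by field_simp; ring
    -- heq: θ0 x0 - μp x0 = θ1 x1 - μp x1
    -- ⇒ θ1 x0 - θ1 x1 > μp x0 - μp x1 = σ²/S (x0 - x1), contradicting slope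
    nlinarith
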